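/- Let G and H be sub-σ-algebras of a probability space with ψ = ψ(G,H) < 1, where ψ(G,H) = sup{|P(A∩B)/(P(A)P(B)) − 1| : A ∈ G, B ∈ H, P(A)P(B) > 0}. Then for every bounded G-measurable real function g and integrable H-measurable real function h, |E[hg] − E[h]E[g]| ≤ (1−ψ)^{-1} ψ · E[|hg|]. -/

import Mathlib

/-!
Pulling the bounded `G`-measurable factor out of the conditional expectation gives
`E[hg] - E[h]E[g] = E[g (E[h|G] - E[h])]`, so the uniform bound on `E[h|G] - E[h]` yields
`|Cov(h, g)| ≤ ψ E|h| E|g|`. Applied to `|h|` and `|g|`, the same bound gives the reverse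
estimate `E|hg| ≥ (1 - ψ) E|h| E|g|`; substituting it for `E|h| E|g|` gives the claim.
-/

open MeasureTheory

namespace MeasureTheory

variable {Ω : Type*} {m m0 : MeasurableSpace Ω} {μ : Measure Ω} [IsFiniteMeasure μ]

theorem integral_mul_condExp_of_bound (hm : m ≤ m0) {g h : Ω → ℝ} (hg : StronglyMeasurable[m] g)
    {c : ℝ} (hg_bound : ∀ᵐ ω ∂μ, |g ω| ≤ c) (hh : Integrable h μ) :
    ∫ ω, g ω * (μ[h | m]) ω ∂μ = ∫ ω, g ω * h ω ∂μ := by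
  rw [← integral_condExp hm (f := fun ω => g ω * h ω)]
  exact integral_congr_ae (condExp_stronglyMeasurable_mul_of_bound hm hg hh c hg_bound).symm

theorem abs_integral_mul_sub_le_of_ae_abs_condExp_sub_le (hm : m ≤ m0) {g h : Ω → ℝ}
    (hg : StronglyMeasurable[m] g) {c : ℝ} (hg_bound : ∀ᵐ ω ∂μ, |g ω| ≤ c)
    (hh : Integrable h μ) {K : ℝ} (hK : ∀ᵐ ω ∂μ, |(μ[h | m]) ω - ∫ x, h x ∂μ| ≤ K) :
    |∫ ω, h ω * g ω ∂μ - (∫ ω, h ω ∂μ) * ∫ ω, g ω ∂μ| ≤ K * ∫ ω, |g ω| ∂μ := by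
  have hg_meas : AEStronglyMeasurable g μ := (hg.mono hm).aestronglyMeasurable
  have hg_int : Integrable g μ := (integrable_const c).mono' hg_meas hg_bound
  have hg_condExp : Integrable (fun ω => g ω * (μ[h | m]) ω) μ :=
    integrable_condExp.bdd_mul hg_meas hg_bound
  have hcov : ∫ ω, h ω * g ω ∂μ - (∫ ω, h ω ∂μ) * ∫ ω, g ω ∂μ
      = ∫ ω, g ω * ((μ[h | m]) ω - ∫ x, h x ∂μ) ∂μ := by
    simp_rw [mul_sub]
    rw [integral_sub hg_condExp (hg_int.mul_const _),
      integral_mul_condExp_of_bound hm hg hg_bound hh, integral_mul_const]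
    simp_rw [mul_comm]
  calc |∫ ω, h ω * g ω ∂μ - (∫ ω, h ω ∂μ) * ∫ ω, g ω ∂μ|
      ≤ ∫ ω, |g ω * ((μ[h | m]) ω - ∫ x, h x ∂μ)| ∂μ := hcov ▸ abs_integral_le_integral_abs
    _ ≤ ∫ ω, |g ω| * K ∂μ := by
        refine integral_mono_ae ?_ (hg_int.abs.mul_const K) ?_
        · exact ((integrable_condExp.sub (integrable_const _)).bdd_mul hg_meas hg_bound).abs
        · filter_upwards [hK] with ω hω
          rw [abs_mul]
          exact mul_le_mul_of_nonneg_left hω (abs_nonneg _)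
    _ = K * ∫ ω, |g ω| ∂μ := by rw [integral_mul_const, mul_comm]

end MeasureTheory

theorem abs_le_inv_one_sub_mul_mul_of_abs_le {c I p ψ : ℝ} (hp : 0 ≤ p) (hψ : ψ < 1)
    (hc : |c| ≤ ψ * p) (hI : |I - p| ≤ ψ * p) : |c| ≤ (1 - ψ)⁻¹ * ψ * I := by
  have h1ψ : 0 < 1 - ψ := by linarith
  rw [mul_assoc, le_inv_mul_iff₀ h1ψ]
  obtain ⟨hI_lower, hI_upper⟩ := abs_le.mp hI
  rcases le_or_gt 0 ψ with hψ0 | hψ0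
  · nlinarith [mul_le_mul_of_nonneg_left hc h1ψ.le, mul_le_mul_of_nonneg_left hI_lower hψ0]
  · -- for negative `ψ` the hypotheses force `p = I = 0`
    have hp0 : p = 0 := by nlinarith [abs_nonneg c]
    subst hp0
    have hI0 : I = 0 := by linarith
    subst hI0
    nlinarith [abs_nonneg c]

theorem stmt_2_general {Ω : Type*} [m0 : MeasurableSpace Ω] (μ : Measure Ω) [IsProbabilityMeasure μ]
    (G H : MeasurableSpace Ω) (hG : G ≤ m0)
    (psi : ℝ)
    (hpsi1 : psi < 1)
    (hcond : ∀ h : Ω → ℝ, Measurable[H] h → Integrable h μ →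
      ∀ᵐ ω ∂μ, |(μ[h | G]) ω - ∫ x, h x ∂μ| ≤ (∫ x, |h x| ∂μ) * psi)
    (g h : Ω → ℝ) (Mg : ℝ)
    (hg : Measurable[G] g) (hgb : ∀ ω, |g ω| ≤ Mg)
    (hh : Measurable[H] h) (hhi : Integrable h μ) :
    |∫ ω, h ω * g ω ∂μ - (∫ ω, h ω ∂μ) * ∫ ω, g ω ∂μ| ≤
      (1 - psi)⁻¹ * psi * ∫ ω, |h ω * g ω| ∂μ := by
  have hcov := abs_integral_mul_sub_le_of_ae_abs_condExp_sub_le hG hg.stronglyMeasurable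
    (ae_of_all μ hgb) hhi (hcond h hh hhi)
  have hcov_abs := abs_integral_mul_sub_le_of_ae_abs_condExp_sub_le (g := fun ω => |g ω|)
    (h := fun ω => |h ω|) hG (measurable_abs.comp hg).stronglyMeasurable
    (by simpa using ae_of_all μ hgb) hhi.abs
    (by simpa using hcond (fun ω => |h ω|) (measurable_abs.comp hh) hhi.abs)
  simp only [abs_abs] at hcov_abs
  simp_rw [abs_mul]
  refine abs_le_inv_one_sub_mul_mul_of_abs_le (p := (∫ ω, |h ω| ∂μ) * ∫ ω, |g ω| ∂μ)
    (mul_nonneg (integral_nonneg fun _ => abs_nonneg _) (integral_nonneg fun _ => abs_nonneg _))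
    hpsi1 (by linarith) (by linarith)

/-- ψ-mixing covariance inequality: if `ψ = ψ(G,H) < 1`, then for bounded
`G`-measurable `g` and integrable `H`-measurable `h`,
`|E[hg] − E[h]E[g]| ≤ (1−ψ)⁻¹ ψ E[|hg|]`.  Here
`ψ(G,H) = sup{|P(A∩B)/(P(A)P(B)) − 1| : A ∈ G, B ∈ H, P(A)P(B) > 0}`,
and one may use the standard fact
`‖E[h|G] − E[h]‖_∞ ≤ ‖h‖_{L¹} ψ(G,H)` for integrable `H`-measurable `h`. -/
theorem stmt_2 {Ω : Type*} [m0 : MeasurableSpace Ω] (μ : Measure Ω) [IsProbabilityMeasure μ]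
    (G H : MeasurableSpace Ω) (hG : G ≤ m0) (hH : H ≤ m0)
    (psi : ℝ)
    (hpsidef : psi = sSup {x : ℝ | ∃ A B : Set Ω, MeasurableSet[G] A ∧ MeasurableSet[H] B ∧
        0 < (μ A).toReal * (μ B).toReal ∧
        x = |(μ (A ∩ B)).toReal / ((μ A).toReal * (μ B).toReal) - 1|})
    (hpsi1 : psi < 1)
    (hcond : ∀ h : Ω → ℝ, Measurable[H] h → Integrable h μ →
      ∀ᵐ ω ∂μ, |(μ[h | G]) ω - ∫ x, h x ∂μ| ≤ (∫ x, |h x| ∂μ) * psi)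
    (g h : Ω → ℝ) (Mg : ℝ)
    (hg : Measurable[G] g) (hgb : ∀ ω, |g ω| ≤ Mg)
    (hh : Measurable[H] h) (hhi : Integrable h μ)
    (hhg : Integrable (fun ω => h ω * g ω) μ) :
    |∫ ω, h ω * g ω ∂μ - (∫ ω, h ω ∂μ) * ∫ ω, g ω ∂μ| ≤
      (1 - psi)⁻¹ * psi * ∫ ω, |h ω * g ω| ∂μ :=
  stmt_2_general (m0 := m0) μ G H hG psi hpsi1 hcond g h Mg hg hgb hh hhi
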